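/- Under Assumption 1, the game G has a pure-strategy Nash equilibrium. Moreover every Nash equilibrium is strict: at any Nash equilibrium S*, for each player i the strategy s_i* is the unique maximizer over Δ of the payoff v ↦ Σ_x p_x(v_x + s*_{-i,x})·v_x − c(v). -/

import Mathlib

open Set Finset

/-- Payoff of a player with strategy `v` against opponent aggregate `w`:
`Σ_x p_x(v_x + w_x)·v_x − c(v)`, where `p_x(t) = u_x(t)/t` (and `0/0 = 0` in
Lean, matching the convention that `p_x(t)·v` is read as `0` when `t = 0`). -/
noncomputable def pay {m : ℕ} (u : Fin m → ℝ → ℝ) (c : (Fin m → ℝ) → ℝ)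
    (w v : Fin m → ℝ) : ℝ :=
  (∑ x, u x (v x + w x) / (v x + w x) * v x) - c v

/-- A pure-strategy Nash equilibrium of the game `G`: every strategy lies in
the simplex, and each player's strategy maximizes her payoff against the
aggregate strategy of her opponents. -/
def IsNE {n m : ℕ} (u : Fin m → ℝ → ℝ) (c : (Fin m → ℝ) → ℝ)
    (S : Fin n → Fin m → ℝ) : Prop :=
  (∀ i, S i ∈ stdSimplex ℝ (Fin m)) ∧
  ∀ i, ∀ v ∈ stdSimplex ℝ (Fin m),
    pay u c (fun x => (∑ j, S j x) - S i x) v ≤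
      pay u c (fun x => (∑ j, S j x) - S i x) (S i)

/-- Assumption 1: every `u_x` is concave and differentiable on `[0,∞)` with
`u_x(0) = 0` and nonnegative values, `c` is convex and differentiable on the
simplex with nonnegative values, and either all but at most one of the `u_x`
are strictly concave, or `c` is strictly convex. -/
structure Assumption1 {m : ℕ} (u : Fin m → ℝ → ℝ) (c : (Fin m → ℝ) → ℝ) : Prop where
  u_zero : ∀ x, u x 0 = 0
  u_nonneg : ∀ x, ∀ t ∈ Ici (0:ℝ), 0 ≤ u x t
  u_concave : ∀ x, ConcaveOn ℝ (Ici (0:ℝ)) (u x)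
  u_diff : ∀ x, DifferentiableOn ℝ (u x) (Ici (0:ℝ))
  c_nonneg : ∀ v ∈ stdSimplex ℝ (Fin m), 0 ≤ c v
  c_convex : ConvexOn ℝ (stdSimplex ℝ (Fin m)) c
  c_diff : DifferentiableOn ℝ c (stdSimplex ℝ (Fin m))
  strict : (∃ x₀, ∀ x, x ≠ x₀ → StrictConcaveOn ℝ (Ici (0:ℝ)) (u x)) ∨
    StrictConvexOn ℝ (stdSimplex ℝ (Fin m)) c

/-- The simplex dilated by the factor `r`: `{s : s_x ≥ 0, Σ_x s_x = r}`. -/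
def dilSimplex (m : ℕ) (r : ℝ) : Set (Fin m → ℝ) :=
  {s | (∀ x, 0 ≤ s x) ∧ ∑ x, s x = r}

/-- The potential function
`Φ(s) = Σ_x [(1 − 1/n)·∫_0^{s_x} u_x(t)/t dt + (1/n)·u_x(s_x)] − n·c(s/n)`. -/
noncomputable def potential (n : ℕ) {m : ℕ} (u : Fin m → ℝ → ℝ)
    (c : (Fin m → ℝ) → ℝ) (s : Fin m → ℝ) : ℝ :=
  (∑ x, ((1 - 1/(n:ℝ)) * ∫ t in (0:ℝ)..(s x), u x t / t
    + (1/(n:ℝ)) * u x (s x))) - n * c (fun x => s x / n)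

/-!
Strictness: for a fixed opponent aggregate `w ≥ 0`, the revenue `v ↦ v · u(v + w) / (v + w)` is
concave, since its derivative is a convex combination of the marginal product `u'(v + w)` and the
average product `u(v + w) / (v + w)`; both are nonincreasing, and as `v` grows the weight moves
towards the smaller one, `u'`. Under Assumption 1 a player's payoff is therefore strictly concave
on the simplex and has at most one maximizer.

Existence: let `σ` maximize the potential over the compact simplex. At the symmetric profile
`(σ, …, σ)` a player's payoff and `1 / n` times the potential have the same one-sided derivative at
`σ` in every direction of the simplex. The potential does not increase in any such direction and the
payoff is concave, so `σ` is a best response.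
-/

open Filter Topology

noncomputable def revenue (f : ℝ → ℝ) (w v : ℝ) : ℝ := f (v + w) / (v + w) * v

section Revenue

variable {f : ℝ → ℝ}

lemma revenue_zero_eqOn (hf0 : f 0 = 0) : EqOn f (revenue f 0) (Ici 0) := by
  intro v (hv : 0 ≤ v)
  rcases hv.eq_or_lt with rfl | hv
  · simp [revenue, hf0]
  · simp [revenue, hv.ne']

lemma continuousOn_revenue (hf : ContinuousOn f (Ici 0)) {w : ℝ} (hw : 0 < w) :
    ContinuousOn (revenue f w) (Ici 0) := by
  have hshift : ContinuousOn (fun v : ℝ => v + w) (Ici 0) := by fun_prop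
  refine ((hf.comp hshift fun v (hv : 0 ≤ v) => ?_).div hshift fun v (hv : 0 ≤ v) => ?_).mul
    continuousOn_id
  · exact (add_pos_of_nonneg_of_pos hv hw).le
  · exact (add_pos_of_nonneg_of_pos hv hw).ne'

lemma hasDerivAt_revenue (hdiff : DifferentiableOn ℝ f (Ici 0)) {w v : ℝ} (hvw : 0 < v + w) :
    HasDerivAt (revenue f w)
      (v / (v + w) * derivWithin f (Ici 0) (v + w) + w / (v + w) * (f (v + w) / (v + w))) v := by
  have hshift : HasDerivAt (fun y : ℝ => y + w) 1 v := (hasDerivAt_id v).add_const w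
  have hf : HasDerivAt f (derivWithin f (Ici 0) (v + w)) (v + w) :=
    (hdiff _ hvw.le).hasDerivWithinAt.hasDerivAt (Ici_mem_nhds hvw)
  refine (((hf.comp v hshift).div hshift hvw.ne').mul (hasDerivAt_id v)).congr_deriv ?_
  simp only [Function.comp_apply, Pi.div_apply, id]
  field_simp
  ring

lemma derivWithin_le_div_self (hf0 : f 0 = 0) (hconc : ConcaveOn ℝ (Ici 0) f)
    (hdiff : DifferentiableOn ℝ f (Ici 0)) {t : ℝ} (ht : 0 < t) :
    derivWithin f (Ici 0) t ≤ f t / t := by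
  simpa [slope_def_field, hf0] using
    hconc.derivWithin_le_slope self_mem_Ici ht.le ht (hdiff t ht.le)

lemma derivWithin_lt_div_self (hf0 : f 0 = 0) (hconc : StrictConcaveOn ℝ (Ici 0) f)
    (hdiff : DifferentiableOn ℝ f (Ici 0)) {t : ℝ} (ht : 0 < t) :
    derivWithin f (Ici 0) t < f t / t := by
  simpa [slope_def_field, hf0] using
    hconc.derivWithin_lt_slope self_mem_Ici ht.le ht (hdiff t ht.le)

lemma antitoneOn_div_self (hf0 : f 0 = 0) (hconc : ConcaveOn ℝ (Ici 0) f) :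
    AntitoneOn (fun t => f t / t) (Set.Ioi 0) := by
  intro s (hs : 0 < s) t (ht : 0 < t) hst
  simpa [slope_def_field, hf0] using
    hconc.antitoneOn_slope_gt self_mem_Ici ⟨hs.le, hs⟩ ⟨ht.le, ht⟩ hst

lemma strictMonoOn_div_add {w : ℝ} (hw : 0 < w) : StrictMonoOn (fun v => v / (v + w)) (Ici 0) := by
  intro v₁ (h₁ : 0 ≤ v₁) v₂ (h₂ : 0 ≤ v₂) h₁₂
  rw [div_lt_div_iff₀ (by linarith) (by linarith)]
  nlinarith

lemma deriv_revenue_le (hf0 : f 0 = 0) (hconc : ConcaveOn ℝ (Ici 0) f)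
    (hdiff : DifferentiableOn ℝ f (Ici 0)) {w v₁ v₂ : ℝ} (hw : 0 < w) (h₁ : 0 < v₁)
    (h₁₂ : v₁ ≤ v₂) :
    deriv (revenue f w) v₂ ≤ deriv (revenue f w) v₁ + (v₂ / (v₂ + w) - v₁ / (v₁ + w)) *
      (derivWithin f (Ici 0) (v₁ + w) - f (v₁ + w) / (v₁ + w)) := by
  have ht₁ : 0 < v₁ + w := by linarith
  have ht₂ : 0 < v₂ + w := by linarith
  have ht₁₂ : v₁ + w ≤ v₂ + w := by linarith
  rw [(hasDerivAt_revenue hdiff ht₁).deriv, (hasDerivAt_revenue hdiff ht₂).deriv,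
    show w / (v₁ + w) = 1 - v₁ / (v₁ + w) by field_simp; ring,
    show w / (v₂ + w) = 1 - v₂ / (v₂ + w) by field_simp; ring]
  have hmarginal := hconc.antitoneOn_derivWithin hdiff ht₁.le ht₂.le ht₁₂
  have haverage := antitoneOn_div_self hf0 hconc ht₁ ht₂ ht₁₂
  have : 0 ≤ v₂ / (v₂ + w) := div_nonneg (by linarith) ht₂.le
  have : v₂ / (v₂ + w) ≤ 1 := (div_le_one ht₂).mpr (by linarith)
  nlinarith

lemma antitoneOn_deriv_revenue (hf0 : f 0 = 0) (hconc : ConcaveOn ℝ (Ici 0) f)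
    (hdiff : DifferentiableOn ℝ f (Ici 0)) {w : ℝ} (hw : 0 < w) :
    AntitoneOn (deriv (revenue f w)) (Ioi 0) := by
  intro v₁ (h₁ : 0 < v₁) v₂ (h₂ : 0 < v₂) h₁₂
  refine (deriv_revenue_le hf0 hconc hdiff hw h₁ h₁₂).trans (add_le_of_nonpos_right ?_)
  exact mul_nonpos_of_nonneg_of_nonpos
    (sub_nonneg.mpr ((strictMonoOn_div_add hw).monotoneOn h₁.le h₂.le h₁₂))
    (sub_nonpos.mpr (derivWithin_le_div_self hf0 hconc hdiff (by linarith)))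

lemma strictAntiOn_deriv_revenue (hf0 : f 0 = 0) (hconc : StrictConcaveOn ℝ (Ici 0) f)
    (hdiff : DifferentiableOn ℝ f (Ici 0)) {w : ℝ} (hw : 0 < w) :
    StrictAntiOn (deriv (revenue f w)) (Ioi 0) := by
  intro v₁ (h₁ : 0 < v₁) v₂ (h₂ : 0 < v₂) h₁₂
  refine (deriv_revenue_le hf0 hconc.concaveOn hdiff hw h₁ h₁₂.le).trans_lt
    (add_lt_of_neg_right _ ?_)
  exact mul_neg_of_pos_of_neg (sub_pos.mpr (strictMonoOn_div_add hw h₁.le h₂.le h₁₂))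
    (sub_neg.mpr (derivWithin_lt_div_self hf0 hconc hdiff (by linarith)))

lemma concaveOn_revenue (hf0 : f 0 = 0) (hconc : ConcaveOn ℝ (Ici 0) f)
    (hdiff : DifferentiableOn ℝ f (Ici 0)) {w : ℝ} (hw : 0 ≤ w) :
    ConcaveOn ℝ (Ici 0) (revenue f w) := by
  rcases hw.eq_or_lt with rfl | hw
  · exact hconc.congr (revenue_zero_eqOn hf0)
  refine AntitoneOn.concaveOn_of_deriv (convex_Ici 0) (continuousOn_revenue hdiff.continuousOn hw)
    ?_ (by simpa using antitoneOn_deriv_revenue hf0 hconc hdiff hw)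
  rw [interior_Ici]
  exact fun v (hv : 0 < v) =>
    (hasDerivAt_revenue hdiff (by linarith)).differentiableAt.differentiableWithinAt

lemma strictConcaveOn_revenue (hf0 : f 0 = 0) (hconc : StrictConcaveOn ℝ (Ici 0) f)
    (hdiff : DifferentiableOn ℝ f (Ici 0)) {w : ℝ} (hw : 0 ≤ w) :
    StrictConcaveOn ℝ (Ici 0) (revenue f w) := by
  rcases hw.eq_or_lt with rfl | hw
  · exact hconc.congr (revenue_zero_eqOn hf0)
  exact StrictAntiOn.strictConcaveOn_of_deriv (convex_Ici 0)
    (continuousOn_revenue hdiff.continuousOn hw)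
    (by simpa using strictAntiOn_deriv_revenue hf0 hconc hdiff hw)

end Revenue

/-- The per-unit revenue `f t / t`, extended continuously to `t ≤ 0`, so that the fundamental
theorem of calculus applies to its primitive at `0`. -/
noncomputable def price (f : ℝ → ℝ) (t : ℝ) : ℝ :=
  if t ≤ 0 then derivWithin f (Ici 0) 0 else f t / t

noncomputable def marketPotential (n : ℝ) (f : ℝ → ℝ) (s : ℝ) : ℝ :=
  (1 - 1 / n) * (∫ t in (0 : ℝ)..s, price f t) + 1 / n * f s

section Potential

variable {f : ℝ → ℝ}

lemma price_of_pos {t : ℝ} (ht : 0 < t) : price f t = f t / t := if_neg ht.not_ge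

lemma continuous_price (hf0 : f 0 = 0) (hdiff : DifferentiableOn ℝ f (Ici 0)) :
    Continuous (price f) := by
  have hconst : ∀ s ≤ 0, price f s = derivWithin f (Ici 0) 0 := fun s hs => if_pos hs
  have hright : ContinuousWithinAt (price f) (Set.Ioi 0) 0 := by
    have := hasDerivWithinAt_iff_tendsto_slope.mp (hdiff 0 self_mem_Ici).hasDerivWithinAt
    rw [show Ici (0 : ℝ) \ {0} = Set.Ioi 0 by ext; simp [lt_iff_le_and_ne, eq_comm]] at this
    rw [ContinuousWithinAt, hconst 0 le_rfl]
    refine this.congr' ?_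
    filter_upwards [self_mem_nhdsWithin] with t (ht : 0 < t)
    simp [slope_def_field, hf0, price_of_pos ht]
  rw [continuous_iff_continuousAt]
  intro t
  rcases lt_trichotomy t 0 with ht | rfl | ht
  · refine (continuousAt_const (y := derivWithin f (Ici 0) 0)).congr ?_
    filter_upwards [Iio_mem_nhds ht] with s (hs : s < 0)
    exact (hconst s hs.le).symm
  · refine continuousAt_iff_continuous_left'_right'.mpr ⟨?_, hright⟩
    exact continuousWithinAt_const.congr (fun s hs => hconst s hs.le) (hconst 0 le_rfl)
  · refine ((hdiff.continuousOn.continuousAt (Ici_mem_nhds ht)).div continuousAt_id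
      ht.ne').congr ?_
    filter_upwards [Ioi_mem_nhds ht] with s (hs : 0 < s)
    exact (price_of_pos hs).symm

lemma hasDerivWithinAt_marketPotential (hf0 : f 0 = 0) (hdiff : DifferentiableOn ℝ f (Ici 0))
    (n : ℝ) {s : ℝ} (hs : 0 ≤ s) :
    HasDerivWithinAt (marketPotential n f)
      ((1 - 1 / n) * price f s + 1 / n * derivWithin f (Ici 0) s) (Ici 0) s :=
  (((continuous_price hf0 hdiff).integral_hasStrictDerivAt 0 s).hasDerivAt.hasDerivWithinAt
    |>.const_mul _).add ((hdiff s hs).hasDerivWithinAt.const_mul _)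

lemma hasDerivWithinAt_revenue_sub_marketPotential (hf0 : f 0 = 0)
    (hdiff : DifferentiableOn ℝ f (Ici 0)) {n a : ℝ} (hn : 0 < n) (ha : 0 ≤ a) :
    HasDerivWithinAt (fun v => revenue f ((n - 1) * a) v - 1 / n * marketPotential n f (n * v))
      0 (Ici 0) a := by
  have hscale : MapsTo (fun v : ℝ => n * v) (Ici 0) (Ici 0) :=
    fun v (hv : 0 ≤ v) => mul_nonneg hn.le hv
  have hpot := (hasDerivWithinAt_marketPotential hf0 hdiff n (mul_nonneg hn.le ha)).comp a
    ((hasDerivAt_id a).const_mul n).hasDerivWithinAt hscale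
  rcases ha.eq_or_lt with rfl | ha
  · have hrev : HasDerivWithinAt (revenue f ((n - 1) * 0)) (derivWithin f (Ici 0) 0) (Ici 0) 0 :=
      (hdiff 0 self_mem_Ici).hasDerivWithinAt.congr_of_mem
        (fun v hv => by rw [mul_zero, ← revenue_zero_eqOn hf0 hv]) self_mem_Ici
    refine (hrev.sub (hpot.const_mul (1 / n))).congr_deriv ?_
    simp only [mul_zero, mul_one, price, le_refl, if_true]
    field_simp
    ring
  · have hna : 0 < n * a := mul_pos hn ha
    have hrev := hasDerivAt_revenue hdiff (by nlinarith : 0 < a + (n - 1) * a)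
    rw [show a + (n - 1) * a = n * a by ring] at hrev
    refine (hrev.hasDerivWithinAt.sub (hpot.const_mul (1 / n))).congr_deriv ?_
    simp only [mul_one, price_of_pos hna]
    field_simp
    ring

lemma continuousOn_marketPotential (hf0 : f 0 = 0) (hdiff : DifferentiableOn ℝ f (Ici 0))
    (n : ℝ) : ContinuousOn (marketPotential n f) (Ici 0) :=
  (continuousOn_const.mul (intervalIntegral.continuous_primitive
    (continuous_price hf0 hdiff).intervalIntegrable 0).continuousOn).add
    (continuousOn_const.mul hdiff.continuousOn)

end Potential

section Simplex

variable {ι : Type*} [Fintype ι]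

lemma exists_ne_apply_ne_of_mem_stdSimplex {v v' : ι → ℝ} (hv : v ∈ stdSimplex ℝ ι)
    (hv' : v' ∈ stdSimplex ℝ ι) (hne : v ≠ v') (x₀ : ι) : ∃ x ≠ x₀, v x ≠ v' x := by
  classical
  by_contra! h
  refine hne (funext fun x => ?_)
  rcases eq_or_ne x x₀ with rfl | hx
  · have hsum := hv.2.trans hv'.2.symm
    rwa [← Finset.add_sum_erase _ _ (mem_univ x), ← Finset.add_sum_erase _ _ (mem_univ x),
      Finset.sum_congr rfl fun y hy => h y (Finset.ne_of_mem_erase hy), add_left_inj] at hsum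
  · exact h x hx

lemma concaveOn_sum_apply {s : Set ℝ} {g : ι → ℝ → ℝ} (hg : ∀ x, ConcaveOn ℝ s (g x)) :
    ConcaveOn ℝ (univ.pi fun _ => s) (fun v => ∑ x, g x (v x)) := by
  refine ⟨convex_pi fun x _ => (hg x).1, fun v hv v' hv' a b ha hb hab => ?_⟩
  simp only [smul_eq_mul, Pi.add_apply, Pi.smul_apply, Finset.mul_sum, ← Finset.sum_add_distrib]
  exact Finset.sum_le_sum fun x _ => (hg x).2 (hv x trivial) (hv' x trivial) ha hb hab

lemma strictConcaveOn_stdSimplex_sum_apply {g : ι → ℝ → ℝ} (x₀ : ι)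
    (hg : ∀ x, ConcaveOn ℝ (Ici 0) (g x)) (hgs : ∀ x ≠ x₀, StrictConcaveOn ℝ (Ici 0) (g x)) :
    StrictConcaveOn ℝ (stdSimplex ℝ ι) (fun v => ∑ x, g x (v x)) := by
  refine ⟨convex_stdSimplex ℝ ι, fun v hv v' hv' hne a b ha hb hab => ?_⟩
  obtain ⟨x₁, hx₁, hne₁⟩ := exists_ne_apply_ne_of_mem_stdSimplex hv hv' hne x₀
  simp only [smul_eq_mul, Pi.add_apply, Pi.smul_apply, Finset.mul_sum, ← Finset.sum_add_distrib]
  refine Finset.sum_lt_sum (fun x _ => (hg x).2 (hv.1 x) (hv'.1 x) ha.le hb.le hab)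
    ⟨x₁, mem_univ _, (hgs x₁ hx₁).2 (hv.1 x₁) (hv'.1 x₁) hne₁ ha hb hab⟩

end Simplex

lemma ConcaveOn.le_left_of_isMaxOn_of_hasDerivWithinAt_sub {φ ψ : ℝ → ℝ}
    (hφ : ConcaveOn ℝ (Icc 0 1) φ) (hψ : IsMaxOn ψ (Icc 0 1) 0)
    (hd : HasDerivWithinAt (φ - ψ) 0 (Icc 0 1) 0) : φ 1 ≤ φ 0 := by
  have hslope : Tendsto (slope (φ - ψ) 0) (𝓝[>] 0) (𝓝 0) :=
    (hasDerivWithinAt_iff_tendsto_slope' (lt_irrefl 0)).mp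
      (hd.mono_of_mem_nhdsWithin (Icc_mem_nhdsGT zero_lt_one))
  refine sub_nonpos.mp (ge_of_tendsto hslope ?_)
  filter_upwards [Ioc_mem_nhdsGT zero_lt_one] with l hl
  have hl₀ : l ∈ Icc (0 : ℝ) 1 := Ioc_subset_Icc_self hl
  have hψl : ψ l ≤ ψ 0 := hψ hl₀
  calc φ 1 - φ 0 = slope φ 0 1 := by simp [slope_def_field]
    _ ≤ slope φ 0 l := hφ.slope_anti (left_mem_Icc.mpr zero_le_one) ⟨hl₀, hl.1.ne'⟩
        ⟨right_mem_Icc.mpr zero_le_one, one_ne_zero⟩ hl.2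
    _ ≤ slope (φ - ψ) 0 l := by
        simp only [slope_def_field, Pi.sub_apply]
        exact div_le_div_of_nonneg_right (by linarith) (by linarith [hl.1])

section Game

variable {n m : ℕ} {u : Fin m → ℝ → ℝ} {c : (Fin m → ℝ) → ℝ}

lemma strictConcaveOn_pay (h1 : Assumption1 u c) {w : Fin m → ℝ} (hw : ∀ x, 0 ≤ w x) :
    StrictConcaveOn ℝ (stdSimplex ℝ (Fin m)) (pay u c w) := by
  have hrev : ∀ x, ConcaveOn ℝ (Ici 0) (revenue (u x) (w x)) := fun x =>
    concaveOn_revenue (h1.u_zero x) (h1.u_concave x) (h1.u_diff x) (hw x)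
  change StrictConcaveOn ℝ _ ((fun v => ∑ x, revenue (u x) (w x) (v x)) - c)
  rcases h1.strict with ⟨x₀, hu⟩ | hc
  · exact (strictConcaveOn_stdSimplex_sum_apply x₀ hrev fun x hx =>
      strictConcaveOn_revenue (h1.u_zero x) (hu x hx) (h1.u_diff x) (hw x)).sub_convexOn
        h1.c_convex
  · exact ((concaveOn_sum_apply hrev).subset (fun v hv x _ => hv.1 x)
      (convex_stdSimplex ℝ _)).sub_strictConvexOn hc

lemma IsNE.pay_lt (h1 : Assumption1 u c) {S : Fin n → Fin m → ℝ} (hS : IsNE u c S) (i : Fin n)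
    {v : Fin m → ℝ} (hv : v ∈ stdSimplex ℝ (Fin m)) (hne : v ≠ S i) :
    pay u c (fun x => (∑ j, S j x) - S i x) v < pay u c (fun x => (∑ j, S j x) - S i x) (S i) := by
  have hw : ∀ x, 0 ≤ (∑ j, S j x) - S i x := fun x =>
    sub_nonneg.mpr (Finset.single_le_sum (fun j _ => (hS.1 j).1 x) (mem_univ i))
  have hmax : IsMaxOn (pay u c _) (stdSimplex ℝ (Fin m)) (S i) := fun v hv => hS.2 i v hv
  refine (hS.2 i v hv).lt_of_ne fun heq => hne ?_
  exact (strictConcaveOn_pay h1 hw).eq_of_isMaxOn (fun v' hv' => (hmax hv').trans heq.ge) hmax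
    hv (hS.1 i)

/-- For `σ ≥ 0` this is `potential n u c (n • σ)`: the integrands `price (u x)` and
`fun t => u x t / t` differ only at `t = 0`. -/
noncomputable def symPotential (n : ℝ) (u : Fin m → ℝ → ℝ) (c : (Fin m → ℝ) → ℝ)
    (σ : Fin m → ℝ) : ℝ :=
  (∑ x, marketPotential n (u x) (n * σ x)) - n * c σ

lemma pay_sub_symPotential {n : ℝ} (hn : n ≠ 0) (σ p : Fin m → ℝ) :
    pay u c (fun x => (n - 1) * σ x) p - 1 / n * symPotential n u c p =
      ∑ x, (revenue (u x) ((n - 1) * σ x) (p x) - 1 / n * marketPotential n (u x) (n * p x)) := by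
  rw [Finset.sum_sub_distrib, ← Finset.mul_sum, pay, symPotential, mul_sub,
    ← mul_assoc, one_div_mul_cancel hn, one_mul, sub_sub_sub_cancel_right]
  rfl

lemma continuousOn_symPotential (h1 : Assumption1 u c) {n : ℝ} (hn : 0 ≤ n) :
    ContinuousOn (symPotential n u c) (stdSimplex ℝ (Fin m)) := by
  refine (continuousOn_finsetSum _ fun x _ => ?_).sub
    (continuousOn_const.mul h1.c_diff.continuousOn)
  exact (continuousOn_marketPotential (h1.u_zero x) (h1.u_diff x) n).comp (by fun_prop)
    fun σ hσ => mul_nonneg hn (hσ.1 x)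

lemma pay_le_of_isMaxOn_symPotential (h1 : Assumption1 u c) {n : ℝ} (hn : 1 ≤ n)
    {σ v : Fin m → ℝ} (hσ : σ ∈ stdSimplex ℝ (Fin m)) (hv : v ∈ stdSimplex ℝ (Fin m))
    (hmax : IsMaxOn (symPotential n u c) (stdSimplex ℝ (Fin m)) σ) :
    pay u c (fun x => (n - 1) * σ x) v ≤ pay u c (fun x => (n - 1) * σ x) σ := by
  have hn₀ : 0 < n := by linarith
  have hw : ∀ x, 0 ≤ (n - 1) * σ x := fun x => mul_nonneg (by linarith) (hσ.1 x)
  let line := AffineMap.lineMap (k := ℝ) σ v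
  have hline : MapsTo line (Icc 0 1) (stdSimplex ℝ (Fin m)) := fun l hl =>
    (convex_stdSimplex ℝ _).lineMap_mem hσ hv hl
  have hconc : ConcaveOn ℝ (Icc 0 1) (fun l => pay u c (fun x => (n - 1) * σ x) (line l)) :=
    ((strictConcaveOn_pay h1 hw).concaveOn.comp_affineMap line).subset hline (convex_Icc 0 1)
  have hpot : IsMaxOn (fun l => 1 / n * symPotential n u c (line l)) (Icc 0 1) 0 := fun l hl => by
    simpa [line] using mul_le_mul_of_nonneg_left (hmax (hline hl)) (one_div_pos.mpr hn₀).le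
  have hderiv : HasDerivWithinAt (fun l => ∑ x, (revenue (u x) ((n - 1) * σ x) (line l x)
      - 1 / n * marketPotential n (u x) (n * line l x))) 0 (Icc 0 1) 0 := by
    have := HasDerivWithinAt.fun_sum (u := univ) fun x _ =>
      (hasDerivWithinAt_revenue_sub_marketPotential (h1.u_zero x) (h1.u_diff x) hn₀
        (hσ.1 x)).comp_of_eq 0 (hasDerivAt_pi.mp AffineMap.hasDerivAt_lineMap x).hasDerivWithinAt
        (fun l hl => (hline hl).1 x) (by simp [line])
    simpa using this
  simpa [line] using hconc.le_left_of_isMaxOn_of_hasDerivWithinAt_sub hpot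
    (hderiv.congr (fun l _ => pay_sub_symPotential hn₀.ne' σ (line l))
      (pay_sub_symPotential hn₀.ne' σ (line 0)))

lemma isNE_const_of_isMaxOn (h1 : Assumption1 u c) (hn : 0 < n) {σ : Fin m → ℝ}
    (hσ : σ ∈ stdSimplex ℝ (Fin m)) (hmax : IsMaxOn (symPotential n u c) (stdSimplex ℝ (Fin m)) σ) :
    IsNE u c (fun _ : Fin n => σ) := by
  refine ⟨fun _ => hσ, fun i v hv => ?_⟩
  have hW : (fun x => (∑ _j : Fin n, σ x) - σ x) = fun x => ((n : ℝ) - 1) * σ x := by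
    funext x
    simp only [sum_const, card_univ, Fintype.card_fin, nsmul_eq_mul]
    ring
  rw [hW]
  exact pay_le_of_isMaxOn_symPotential h1 (Nat.one_le_cast.mpr hn) hσ hv hmax

lemma exists_isNE (h1 : Assumption1 u c) (hn : 0 < n) (hm : 0 < m) :
    ∃ S : Fin n → Fin m → ℝ, IsNE u c S := by
  obtain ⟨σ, hσ, hmax⟩ := (isCompact_stdSimplex ℝ (Fin m)).exists_isMaxOn
    ⟨_, single_mem_stdSimplex ℝ ⟨0, hm⟩⟩ (continuousOn_symPotential h1 (Nat.cast_nonneg n))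
  exact ⟨_, isNE_const_of_isMaxOn h1 hn hσ hmax⟩

end Game

/-- Under Assumption 1 the game `G` has a pure-strategy Nash
equilibrium, and every Nash equilibrium is strict: each `s_i*` is the unique
maximizer of player `i`'s payoff against the equilibrium opponent aggregate. -/
theorem NE_exists_and_strict (n m : ℕ) (hn : 2 ≤ n) (hm : 2 ≤ m)
    (u : Fin m → ℝ → ℝ) (c : (Fin m → ℝ) → ℝ)
    (h1 : Assumption1 u c) :
    (∃ S : Fin n → Fin m → ℝ, IsNE u c S) ∧
    ∀ S : Fin n → Fin m → ℝ, IsNE u c S →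
      ∀ i, ∀ v ∈ stdSimplex ℝ (Fin m), v ≠ S i →
        pay u c (fun x => (∑ j, S j x) - S i x) v <
          pay u c (fun x => (∑ j, S j x) - S i x) (S i) :=
  ⟨exists_isNE h1 (by omega) (by omega), fun _ hS i _ hv hne => hS.pay_lt h1 i hv hne⟩
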